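/- Let s be a schedule and let t1, …, tn (pairwise distinct transactions) form a conflict cycle in the conflict graph of s with edges e_1: t1 → t2, e_2: t2 → t3, …, e_n: t_n → t1, where each edge e_k is on some object. Suppose two of these edges, e_i and e_s with non-adjacent indices (the cyclic distance between i and s is at least 2), are both on the same object x. Then there exists a conflict cycle in the conflict graph of s whose transactions form a nonempty subset of {t1, …, tn}, which has strictly fewer edges than the original cycle, and in which the edges on object x number at most two and are consecutive along the cycle. -/
import Mathlib


/-- The kind of an operation: read or write. -/
inductive OpKind where
  | read : OpKind
  | write : OpKind
deriving DecidableEq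

/-- An operation: a transaction identifier, an object identifier, and a kind. -/
structure Op where
  txn : ℕ
  obj : ℕ
  kind : OpKind

/-- The conflict graph of schedule `s` has an edge on object `x` from `t₁` to `t₂`:
some operation of `t₁` on `x` conflicts with a later-positioned operation of `t₂` on `x`. -/
def ConflictEdgeOn (s : List Op) (x t₁ t₂ : ℕ) : Prop :=
  ∃ (i j : ℕ) (p q : Op), i < j ∧ s[i]? = some p ∧ s[j]? = some q ∧
    p.txn = t₁ ∧ q.txn = t₂ ∧ t₁ ≠ t₂ ∧
    p.obj = x ∧ q.obj = x ∧
    (p.kind = OpKind.write ∨ q.kind = OpKind.write)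

/-- A conflict cycle in the conflict graph of schedule `s`: `len` pairwise
distinct transactions `txn 0 → txn 1 → ⋯ → txn (len-1) → txn 0`, where the
`k`-th edge is witnessed on object `obj k`. -/
structure ConflictCycle (s : List Op) where
  len : ℕ
  len_pos : 0 < len
  txn : Fin len → ℕ
  obj : Fin len → ℕ
  inj : Function.Injective txn
  edges : ∀ k : Fin len,
    ConflictEdgeOn s (obj k) (txn k)
      (txn ⟨(k.val + 1) % len, Nat.mod_lt _ len_pos⟩)

namespace GapReduce

lemma op_ne_pos {s : List Op} {i j : ℕ} {p q : Op}
    (hi : s[i]? = some p) (hj : s[j]? = some q) (h : p.txn ≠ q.txn) : i ≠ j := by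
  rintro rfl
  rw [hi] at hj
  injection hj with hpq
  exact h (congrArg Op.txn hpq)

lemma mk_edge {s : List Op} {x i j : ℕ} {p q : Op}
    (hij : i < j) (hi : s[i]? = some p) (hj : s[j]? = some q)
    (hne : p.txn ≠ q.txn) (hpx : p.obj = x) (hqx : q.obj = x)
    (hw : p.kind = OpKind.write ∨ q.kind = OpKind.write) :
    ConflictEdgeOn s x p.txn q.txn :=
  ⟨i, j, p, q, hij, hi, hj, rfl, rfl, hne, hpx, hqx, hw⟩

lemma edge_cross {s : List Op} {x : ℕ} {i j : ℕ} {p q : Op}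
    (hi : s[i]? = some p) (hj : s[j]? = some q)
    (hne : p.txn ≠ q.txn) (hpx : p.obj = x) (hqx : q.obj = x)
    (hw : p.kind = OpKind.write ∨ q.kind = OpKind.write) :
    ConflictEdgeOn s x p.txn q.txn ∨ ConflictEdgeOn s x q.txn p.txn := by
  rcases lt_trichotomy i j with h | h | h
  · exact Or.inl (mk_edge h hi hj hne hpx hqx hw)
  · exact absurd h (op_ne_pos hi hj hne)
  · exact Or.inr (mk_edge h hj hi (Ne.symm hne) hqx hpx hw.symm)

lemma shortcut {s : List Op} {x A B C D : ℕ} (hAC : A ≠ C) (hBD : B ≠ D)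
    (e1 : ConflictEdgeOn s x A B) (e2 : ConflictEdgeOn s x C D) :
    ConflictEdgeOn s x A C ∨ ConflictEdgeOn s x C A ∨
      ConflictEdgeOn s x B D ∨ ConflictEdgeOn s x D B := by
  obtain ⟨i, j, p, q, hij, hi, hj, hpA, hqB, -, hpx, hqx, hw⟩ := e1
  obtain ⟨i', j', p', q', hij', hi', hj', hpC, hqD, -, hpx', hqx', hw'⟩ := e2
  subst hpA hqB hpC hqD
  rcases hw with hwp | hwq
  · rcases edge_cross hi hi' hAC hpx hpx' (Or.inl hwp) with h | h
    · exact Or.inl h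
    · exact Or.inr (Or.inl h)
  · rcases hw' with hwp' | hwq'
    · rcases edge_cross hi hi' hAC hpx hpx' (Or.inr hwp') with h | h
      · exact Or.inl h
      · exact Or.inr (Or.inl h)
    · rcases edge_cross hj hj' hBD hqx hqx' (Or.inl hwq) with h | h
      · exact Or.inr (Or.inr (Or.inl h))
      · exact Or.inr (Or.inr (Or.inr h))

lemma two_of_three {s : List Op} {x u v w : ℕ}
    (huv : u ≠ v) (hvw : v ≠ w) (hwu : w ≠ u)
    (e1 : ConflictEdgeOn s x u v) (e2 : ConflictEdgeOn s x v w)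
    (e3 : ConflictEdgeOn s x w u) :
    ∃ α β : ℕ, α ≠ β ∧ (α = u ∨ α = v ∨ α = w) ∧ (β = u ∨ β = v ∨ β = w) ∧
      ConflictEdgeOn s x α β ∧ ConflictEdgeOn s x β α := by
  obtain ⟨i1, j1, o1, o2, h1, hi1, hj1, ht1, ht2, -, hx1, hx2, -⟩ := id e1
  obtain ⟨i2, j2, o3, o4, h2, hi2, hj2, ht3, ht4, -, hx3, hx4, -⟩ := id e2
  obtain ⟨i3, j3, o5, o6, h3, hi3, hj3, ht5, ht6, -, hx5, hx6, hw3⟩ := id e3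
  rcases hw3 with hW | hW
  · -- o5 (txn w, at i3) is a write; compare i3 vs j1 (o2 : txn v)
    rcases lt_trichotomy i3 j1 with h | h | h
    · have e := mk_edge h hi3 hj1 (by rw [ht5, ht2]; exact hvw.symm) hx5 hx2 (Or.inl hW)
      rw [ht5, ht2] at e
      exact ⟨v, w, hvw, Or.inr (Or.inl rfl), Or.inr (Or.inr rfl), e2, e⟩
    · exact absurd h (op_ne_pos hi3 hj1 (by rw [ht5, ht2]; exact hvw.symm))
    · have e := mk_edge (h1.trans h) hi1 hi3 (by rw [ht1, ht5]; exact hwu.symm) hx1 hx5 (Or.inr hW)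
      rw [ht1, ht5] at e
      exact ⟨u, w, hwu.symm, Or.inl rfl, Or.inr (Or.inr rfl), e, e3⟩
  · -- o6 (txn u, at j3) is a write; compare j3 vs j2 (o4 : txn w)
    rcases lt_trichotomy j3 j2 with h | h | h
    · have e := mk_edge h hj3 hj2 (by rw [ht6, ht4]; exact hwu.symm) hx6 hx4 (Or.inl hW)
      rw [ht6, ht4] at e
      exact ⟨u, w, hwu.symm, Or.inl rfl, Or.inr (Or.inr rfl), e, e3⟩
    · exact absurd h (op_ne_pos hj3 hj2 (by rw [ht6, ht4]; exact hwu.symm))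
    · have e := mk_edge (h2.trans h) hi2 hj3 (by rw [ht3, ht6]; exact huv.symm) hx3 hx6 (Or.inr hW)
      rw [ht3, ht6] at e
      exact ⟨u, v, huv, Or.inl rfl, Or.inr (Or.inl rfl), e1, e⟩

lemma succ_mod' {u n : ℕ} (h : u < n) :
    ((u + 1) % n = u + 1 ∧ u + 1 < n) ∨ ((u + 1) % n = 0 ∧ u + 1 = n) := by
  rcases lt_or_eq_of_le (Nat.succ_le_of_lt h) with h1 | h1
  · exact Or.inl ⟨Nat.mod_eq_of_lt h1, h1⟩
  · exact Or.inr ⟨by rw [show u + 1 = n from h1, Nat.mod_self], h1⟩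

lemma submod' {a b n : ℕ} (ha : a < n) (hb : b < n) :
    (a < b ∧ (a + n - b) % n = a + n - b) ∨ (b ≤ a ∧ (a + n - b) % n = a - b) := by
  rcases lt_or_ge a b with h | h
  · exact Or.inl ⟨h, Nat.mod_eq_of_lt (by omega)⟩
  · refine Or.inr ⟨h, ?_⟩
    rw [show a + n - b = (a - b) + n by omega, Nat.add_mod_right]
    exact Nat.mod_eq_of_lt (by omega)


def twoCycle (s : List Op) (x α β : ℕ) (hne : α ≠ β)
    (e1 : ConflictEdgeOn s x α β) (e2 : ConflictEdgeOn s x β α) : ConflictCycle s where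
  len := 2
  len_pos := by norm_num
  txn := fun k => if k.val = 0 then α else β
  obj := fun _ => x
  inj := by
    intro k1 k2 h
    dsimp only at h
    by_cases h1 : k1.val = 0 <;> by_cases h2 : k2.val = 0 <;> simp only [h1, h2, if_pos, if_neg, if_true, if_false] at h <;>
      first
        | exact Fin.ext (by omega)
        | exact absurd h hne
        | exact absurd h.symm hne
        | simp_all
  edges := by
    intro k
    rcases k with ⟨kv, hkv⟩
    interval_cases kv
    · simpa using e1
    · simpa using e2

lemma twoCycle_len (s : List Op) (x α β : ℕ) (hne : α ≠ β)
    (e1 : ConflictEdgeOn s x α β) (e2 : ConflictEdgeOn s x β α) :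
    (twoCycle s x α β hne e1 e2).len = 2 := rfl

lemma twoCycle_txn (s : List Op) (x α β : ℕ) (hne : α ≠ β)
    (e1 : ConflictEdgeOn s x α β) (e2 : ConflictEdgeOn s x β α)
    (k : Fin (twoCycle s x α β hne e1 e2).len) :
    (twoCycle s x α β hne e1 e2).txn k = if k.val = 0 then α else β := rfl

def subCycle (s : List Op) (x : ℕ) (c : ConflictCycle s) (a b : Fin c.len)
    (e : ConflictEdgeOn s x (c.txn a) (c.txn b)) : ConflictCycle s where
  len := (a.val + c.len - b.val) % c.len + 1
  len_pos := Nat.succ_pos _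
  txn := fun k => c.txn ⟨(b.val + k.val) % c.len, Nat.mod_lt _ c.len_pos⟩
  obj := fun k => if k.val = (a.val + c.len - b.val) % c.len then x
    else c.obj ⟨(b.val + k.val) % c.len, Nat.mod_lt _ c.len_pos⟩
  inj := by
    intro k1 k2 h
    have h3 : (b.val + k1.val) % c.len = (b.val + k2.val) % c.len :=
      congrArg Fin.val (c.inj h)
    have h4 : k1.val % c.len = k2.val % c.len :=
      Nat.ModEq.add_left_cancel' b.val h3
    have hd : (a.val + c.len - b.val) % c.len < c.len := Nat.mod_lt _ c.len_pos
    have hk1 : k1.val < c.len := by have := k1.isLt; omega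
    have hk2 : k2.val < c.len := by have := k2.isLt; omega
    rw [Nat.mod_eq_of_lt hk1, Nat.mod_eq_of_lt hk2] at h4
    exact Fin.ext h4
  edges := by
    intro k
    by_cases hk : k.val = (a.val + c.len - b.val) % c.len
    · have hlast : (b.val + k.val) % c.len = a.val := by
        rw [hk, Nat.add_mod_mod,
          show b.val + (a.val + c.len - b.val) = a.val + c.len by
            have := a.isLt; have := b.isLt; omega,
          Nat.add_mod_right]
        exact Nat.mod_eq_of_lt a.isLt
      have hnext : (k.val + 1) % ((a.val + c.len - b.val) % c.len + 1) = 0 := by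
        rw [hk]; exact Nat.mod_self _
      have h0 : (b.val + (k.val + 1) % ((a.val + c.len - b.val) % c.len + 1)) % c.len
          = b.val := by
        rw [hnext, Nat.add_zero]; exact Nat.mod_eq_of_lt b.isLt
      simp only [if_pos hk]
      have hA : (⟨(b.val + k.val) % c.len, Nat.mod_lt _ c.len_pos⟩ : Fin c.len) = a :=
        Fin.ext hlast
      have hB : (⟨(b.val + (k.val + 1) % ((a.val + c.len - b.val) % c.len + 1)) % c.len,
          Nat.mod_lt _ c.len_pos⟩ : Fin c.len) = b := Fin.ext h0
      rw [hA, hB]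
      exact e
    · have hd : (a.val + c.len - b.val) % c.len < c.len := Nat.mod_lt _ c.len_pos
      have hk' : k.val < (a.val + c.len - b.val) % c.len := by have := k.isLt; omega
      have h1 : (k.val + 1) % ((a.val + c.len - b.val) % c.len + 1) = k.val + 1 :=
        Nat.mod_eq_of_lt (by omega)
      have h2 : ((b.val + k.val) % c.len + 1) % c.len = (b.val + (k.val + 1)) % c.len := by
        rw [Nat.mod_add_mod, Nat.add_assoc]
      simp only [if_neg hk]
      have hB : (⟨(b.val + (k.val + 1) % ((a.val + c.len - b.val) % c.len + 1)) % c.len,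
          Nat.mod_lt _ c.len_pos⟩ : Fin c.len)
          = ⟨((b.val + k.val) % c.len + 1) % c.len, Nat.mod_lt _ c.len_pos⟩ := by
        apply Fin.ext
        show (b.val + (k.val + 1) % ((a.val + c.len - b.val) % c.len + 1)) % c.len = _
        rw [h1]
        exact h2.symm
      rw [hB]
      exact c.edges ⟨(b.val + k.val) % c.len, Nat.mod_lt _ c.len_pos⟩

lemma subCycle_len (s : List Op) (x : ℕ) (c : ConflictCycle s) (a b : Fin c.len)
    (e : ConflictEdgeOn s x (c.txn a) (c.txn b)) :
    (subCycle s x c a b e).len = (a.val + c.len - b.val) % c.len + 1 := rfl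

lemma subCycle_sub (s : List Op) (x : ℕ) (c : ConflictCycle s) (a b : Fin c.len)
    (e : ConflictEdgeOn s x (c.txn a) (c.txn b)) :
    ∀ k : Fin (subCycle s x c a b e).len, ∃ l : Fin c.len,
      (subCycle s x c a b e).txn k = c.txn l :=
  fun _ => ⟨_, rfl⟩


lemma main (s : List Op) (x : ℕ) : ∀ n : ℕ, ∀ c : ConflictCycle s, c.len = n →
    ∀ i j : Fin c.len, i ≠ j →
    (i.val + 1) % c.len ≠ j.val → (j.val + 1) % c.len ≠ i.val →
    c.obj i = x → c.obj j = x →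
    ∃ c' : ConflictCycle s,
      (∀ k : Fin c'.len, ∃ l : Fin c.len, c'.txn k = c.txn l) ∧
      c'.len < c.len ∧
      (Finset.univ.filter (fun k : Fin c'.len => c'.obj k = x)).card ≤ 2 ∧
      (∀ k l : Fin c'.len, c'.obj k = x → c'.obj l = x →
        k = l ∨ (k.val + 1) % c'.len = l.val ∨ (l.val + 1) % c'.len = k.val) := by
  intro n
  induction n using Nat.strong_induction_on with
  | _ n IH =>
    intro c hn i j hij hna1 hna2 hxi hxj
    have hval : i.val ≠ j.val := fun h => hij (Fin.ext h)
    have hiv := i.isLt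
    have hjv := j.isLt
    have hij' : ((i.val + 1) % c.len) ≠ ((j.val + 1) % c.len) := by
      rcases succ_mod' hiv with ⟨h1, h2⟩ | ⟨h1, h2⟩ <;>
        rcases succ_mod' hjv with ⟨h3, h4⟩ | ⟨h3, h4⟩ <;> omega
    have ei := c.edges i
    have ej := c.edges j
    rw [hxi] at ei
    rw [hxj] at ej
    have hAC : c.txn i ≠ c.txn j := fun h => hij (c.inj h)
    have hBD : c.txn ⟨(i.val + 1) % c.len, Nat.mod_lt _ c.len_pos⟩
        ≠ c.txn ⟨(j.val + 1) % c.len, Nat.mod_lt _ c.len_pos⟩ :=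
      fun h => hij' (congrArg Fin.val (c.inj h))
    have key : ∃ a b : Fin c.len, a ≠ b ∧ (a.val + 1) % c.len ≠ b.val ∧
        ConflictEdgeOn s x (c.txn a) (c.txn b) := by
      rcases shortcut hAC hBD ei ej with e | e | e | e
      · exact ⟨i, j, hij, hna1, e⟩
      · exact ⟨j, i, hij.symm, hna2, e⟩
      · refine ⟨⟨(i.val + 1) % c.len, Nat.mod_lt _ c.len_pos⟩,
          ⟨(j.val + 1) % c.len, Nat.mod_lt _ c.len_pos⟩,
          fun h => hij' (congrArg Fin.val h), ?_, e⟩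
        show ((i.val + 1) % c.len + 1) % c.len ≠ (j.val + 1) % c.len
        have hpi : (i.val + 1) % c.len < c.len := Nat.mod_lt _ c.len_pos
        rcases succ_mod' hiv with ⟨h1, h2⟩ | ⟨h1, h2⟩ <;>
          rcases succ_mod' hjv with ⟨h3, h4⟩ | ⟨h3, h4⟩ <;>
          rcases succ_mod' hpi with ⟨h5, h6⟩ | ⟨h5, h6⟩ <;> omega
      · refine ⟨⟨(j.val + 1) % c.len, Nat.mod_lt _ c.len_pos⟩,
          ⟨(i.val + 1) % c.len, Nat.mod_lt _ c.len_pos⟩,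
          fun h => hij' (congrArg Fin.val h).symm, ?_, e⟩
        show ((j.val + 1) % c.len + 1) % c.len ≠ (i.val + 1) % c.len
        have hpj : (j.val + 1) % c.len < c.len := Nat.mod_lt _ c.len_pos
        rcases succ_mod' hiv with ⟨h1, h2⟩ | ⟨h1, h2⟩ <;>
          rcases succ_mod' hjv with ⟨h3, h4⟩ | ⟨h3, h4⟩ <;>
          rcases succ_mod' hpj with ⟨h5, h6⟩ | ⟨h5, h6⟩ <;> omega
    obtain ⟨a, b, hab, hnadj, e⟩ := key
    have habv : a.val ≠ b.val := fun h => hab (Fin.ext h)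
    have hav := a.isLt
    have hbv := b.isLt
    have hlt : (subCycle s x c a b e).len < c.len := by
      rw [subCycle_len]
      rcases submod' hav hbv with ⟨h1, h2⟩ | ⟨h1, h2⟩ <;>
        rcases succ_mod' hav with ⟨h3, h4⟩ | ⟨h3, h4⟩ <;> omega
    set c₂ := subCycle s x c a b e with hc₂
    have hsub₂ : ∀ k : Fin c₂.len, ∃ l : Fin c.len, c₂.txn k = c.txn l :=
      subCycle_sub s x c a b e
    by_cases hcons : ∀ k l : Fin c₂.len, c₂.obj k = x → c₂.obj l = x →
        k = l ∨ (k.val + 1) % c₂.len = l.val ∨ (l.val + 1) % c₂.len = k.val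
    · by_cases hcard :
        (Finset.univ.filter (fun k : Fin c₂.len => c₂.obj k = x)).card ≤ 2
      · exact ⟨c₂, hsub₂, hlt, hcard, hcons⟩
      · push_neg at hcard
        obtain ⟨k1, k2, k3, hk1, hk2, hk3, h12, h13, h23⟩ :=
          Finset.two_lt_card_iff.mp hcard
        simp only [Finset.mem_filter, Finset.mem_univ, true_and] at hk1 hk2 hk3
        have v12 : k1.val ≠ k2.val := fun h => h12 (Fin.ext h)
        have v13 : k1.val ≠ k3.val := fun h => h13 (Fin.ext h)
        have v23 : k2.val ≠ k3.val := fun h => h23 (Fin.ext h)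
        have b12 : (k1.val + 1) % c₂.len = k2.val ∨ (k2.val + 1) % c₂.len = k1.val := by
          rcases hcons k1 k2 hk1 hk2 with h | h | h
          · exact absurd h h12
          · exact Or.inl h
          · exact Or.inr h
        have b13 : (k1.val + 1) % c₂.len = k3.val ∨ (k3.val + 1) % c₂.len = k1.val := by
          rcases hcons k1 k3 hk1 hk3 with h | h | h
          · exact absurd h h13
          · exact Or.inl h
          · exact Or.inr h
        have b23 : (k2.val + 1) % c₂.len = k3.val ∨ (k3.val + 1) % c₂.len = k2.val := by
          rcases hcons k2 k3 hk2 hk3 with h | h | h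
          · exact absurd h h23
          · exact Or.inl h
          · exact Or.inr h
        have w1 := k1.isLt
        have w2 := k2.isLt
        have w3 := k3.isLt
        have hm3 : c₂.len = 3 := by
          rcases succ_mod' w1 with ⟨g1, g2⟩ | ⟨g1, g2⟩ <;>
            rcases succ_mod' w2 with ⟨g3, g4⟩ | ⟨g3, g4⟩ <;>
            rcases succ_mod' w3 with ⟨g5, g6⟩ | ⟨g5, g6⟩ <;> omega
        have hallx : ∀ k : Fin c₂.len, c₂.obj k = x := by
          intro k
          have hkv := k.isLt
          have : k.val = k1.val ∨ k.val = k2.val ∨ k.val = k3.val := by omega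
          rcases this with h | h | h
          · rw [Fin.ext h]; exact hk1
          · rw [Fin.ext h]; exact hk2
          · rw [Fin.ext h]; exact hk3
        have h0 : (0 : ℕ) < c₂.len := c₂.len_pos
        have h1 : (1 : ℕ) < c₂.len := by omega
        have h2 : (2 : ℕ) < c₂.len := by omega
        have huv : c₂.txn ⟨0, h0⟩ ≠ c₂.txn ⟨1, h1⟩ :=
          fun h => absurd (congrArg Fin.val (c₂.inj h)) (by norm_num)
        have hvw : c₂.txn ⟨1, h1⟩ ≠ c₂.txn ⟨2, h2⟩ :=
          fun h => absurd (congrArg Fin.val (c₂.inj h)) (by norm_num)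
        have hwu : c₂.txn ⟨2, h2⟩ ≠ c₂.txn ⟨0, h0⟩ :=
          fun h => absurd (congrArg Fin.val (c₂.inj h)) (by norm_num)
        have E0 : ConflictEdgeOn s x (c₂.txn ⟨0, h0⟩) (c₂.txn ⟨1, h1⟩) := by
          have hE := c₂.edges ⟨0, h0⟩
          rw [hallx] at hE
          have hfix : (⟨((0 : ℕ) + 1) % c₂.len, Nat.mod_lt _ c₂.len_pos⟩ : Fin c₂.len)
              = ⟨1, h1⟩ := Fin.ext (by show (0 + 1) % c₂.len = 1; rw [hm3])
          rwa [hfix] at hE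
        have E1 : ConflictEdgeOn s x (c₂.txn ⟨1, h1⟩) (c₂.txn ⟨2, h2⟩) := by
          have hE := c₂.edges ⟨1, h1⟩
          rw [hallx] at hE
          have hfix : (⟨((1 : ℕ) + 1) % c₂.len, Nat.mod_lt _ c₂.len_pos⟩ : Fin c₂.len)
              = ⟨2, h2⟩ := Fin.ext (by show (1 + 1) % c₂.len = 2; rw [hm3])
          rwa [hfix] at hE
        have E2 : ConflictEdgeOn s x (c₂.txn ⟨2, h2⟩) (c₂.txn ⟨0, h0⟩) := by
          have hE := c₂.edges ⟨2, h2⟩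
          rw [hallx] at hE
          have hfix : (⟨((2 : ℕ) + 1) % c₂.len, Nat.mod_lt _ c₂.len_pos⟩ : Fin c₂.len)
              = ⟨0, h0⟩ := Fin.ext (by show (2 + 1) % c₂.len = 0; rw [hm3])
          rwa [hfix] at hE
        obtain ⟨α, β, hαβ, hα, hβ, eab, eba⟩ := two_of_three huv hvw hwu E0 E1 E2
        have hαc : ∃ l : Fin c.len, α = c.txn l := by
          rcases hα with h | h | h <;>
            · rw [h]
              obtain ⟨l, hl⟩ := hsub₂ _
              exact ⟨l, hl⟩
        have hβc : ∃ l : Fin c.len, β = c.txn l := by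
          rcases hβ with h | h | h <;>
            · rw [h]
              obtain ⟨l, hl⟩ := hsub₂ _
              exact ⟨l, hl⟩
        refine ⟨twoCycle s x α β hαβ eab eba, ?_, ?_, ?_, ?_⟩
        · intro k
          rw [twoCycle_txn]
          by_cases hk : k.val = 0
          · obtain ⟨l, hl⟩ := hαc
            exact ⟨l, by rw [if_pos hk]; exact hl⟩
          · obtain ⟨l, hl⟩ := hβc
            exact ⟨l, by rw [if_neg hk]; exact hl⟩
        · rw [twoCycle_len]; omega
        · refine le_trans (Finset.card_filter_le _ _) ?_
          rw [Finset.card_univ]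
          exact le_of_eq (Fintype.card_fin _)
        · intro k l _ _
          have hk : k.val < 2 := k.isLt
          have hl : l.val < 2 := l.isLt
          by_cases h : k.val = l.val
          · exact Or.inl (Fin.ext h)
          · refine Or.inr (Or.inl ?_)
            show (k.val + 1) % 2 = l.val
            omega
    · push_neg at hcons
      obtain ⟨k, l, hkx, hlx, hkl, hkl1, hkl2⟩ := hcons
      obtain ⟨c₃, hsub₃, hlt₃, hcard₃, hcons₃⟩ :=
        IH c₂.len (by omega) c₂ rfl k l hkl hkl1 hkl2 hkx hlx
      refine ⟨c₃, ?_, by omega, hcard₃, hcons₃⟩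
      intro k'
      obtain ⟨l', hl'⟩ := hsub₃ k'
      obtain ⟨l'', hl''⟩ := hsub₂ l'
      exact ⟨l'', hl'.trans hl''⟩

end GapReduce

/-- If two non-adjacent edges of a conflict cycle are on the same object `x`,
then there is a shorter conflict cycle (over a nonempty subset of the original
transactions) in which the edges on `x` number at most two and are consecutive. -/
theorem gap_edges_same_object_reduce
    (s : List Op) (c : ConflictCycle s) (x : ℕ)
    (i j : Fin c.len) (hij : i ≠ j)
    (hna1 : (i.val + 1) % c.len ≠ j.val)
    (hna2 : (j.val + 1) % c.len ≠ i.val)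
    (hxi : c.obj i = x) (hxj : c.obj j = x) :
    ∃ c' : ConflictCycle s,
      (∀ k : Fin c'.len, ∃ l : Fin c.len, c'.txn k = c.txn l) ∧
      c'.len < c.len ∧
      (Finset.univ.filter (fun k : Fin c'.len => c'.obj k = x)).card ≤ 2 ∧
      (∀ k l : Fin c'.len, c'.obj k = x → c'.obj l = x →
        k = l ∨ (k.val + 1) % c'.len = l.val ∨ (l.val + 1) % c'.len = k.val) :=
  GapReduce.main s x c.len c rfl i j hij hna1 hna2 hxi hxj
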